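/- arXiv:1905.10428 — 6 statements merged into one kernel-verified Lean document; each statement's English description precedes it below -/
import Mathlib

section
/- Assume λ1 > 0, λ2 ≥ 0 with λ1 + λ2 ≥ 1, and assume π_i > 0 for every class i. Then for all conditional probabilities P_R^i, P_L^i ∈ [0,1] (i = 1,…,K) satisfying P_R^i + P_L^i ≥ 1 for every i, the binary objective J satisfies −λ1 ≤ J ≤ λ2. Moreover, J = −λ1 if and only if the split is perfectly balanced and perfectly pure. -/
/-!
Write `d i = P_R^i - P_L^i`, `s i = P_R^i + P_L^i` and let `A = ∑ π i |d i|`, `S = ∑ π i s i`.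
Since `P_R^i, P_L^i ≤ 1` and `s i ≥ 1`, averaging gives `|P_R - P_L| ≤ A ≤ 1 ≤ S` and, from
`|d i| + s i = 2 max (P_R^i, P_L^i) ≤ 2`, also `A + S ≤ 2`. Thus
`J = |P_R - P_L| - λ1 A + λ2 (S - 1)` lies between `-λ1 A ≥ -λ1` and
`(1 - λ1 - λ2) A + λ2 ≤ λ2`. The lower bound is attained exactly when `P_R = P_L` and `A = 1`
(then `S ≤ 2 - A = 1` kills the `λ2` term), and, all weights being positive, `A = 1` forces
`|d i| = 1`, i.e. purity, for every class.
-/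

open Finset

section WeightedAverage

variable {ι : Type*} [Fintype ι] {w f : ι → ℝ} {c : ℝ}

lemma sum_mul_le_of_forall_le (hw : ∀ i, 0 ≤ w i) (hw1 : ∑ i, w i = 1) (hf : ∀ i, f i ≤ c) :
    ∑ i, w i * f i ≤ c :=
  calc ∑ i, w i * f i ≤ ∑ i, w i * c :=
        sum_le_sum fun i _ => mul_le_mul_of_nonneg_left (hf i) (hw i)
    _ = c := by rw [← sum_mul, hw1, one_mul]

lemma le_sum_mul_of_forall_le (hw : ∀ i, 0 ≤ w i) (hw1 : ∑ i, w i = 1) (hf : ∀ i, c ≤ f i) :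
    c ≤ ∑ i, w i * f i :=
  calc c = ∑ i, w i * c := by rw [← sum_mul, hw1, one_mul]
    _ ≤ ∑ i, w i * f i := sum_le_sum fun i _ => mul_le_mul_of_nonneg_left (hf i) (hw i)

lemma sum_mul_eq_iff_forall_eq (hw : ∀ i, 0 < w i) (hw1 : ∑ i, w i = 1) (hf : ∀ i, f i ≤ c) :
    ∑ i, w i * f i = c ↔ ∀ i, f i = c := by
  have hc : c = ∑ i, w i * c := by rw [← sum_mul, hw1, one_mul]
  conv_lhs => rw [hc]
  rw [sum_eq_sum_iff_of_le fun i _ => mul_le_mul_of_nonneg_left (hf i) (hw i).le]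
  simp only [mem_univ, true_implies, mul_right_inj' (hw _).ne']

end WeightedAverage

section UnitInterval

variable {a b : ℝ}

lemma abs_sub_add_add_le_two (ha : a ≤ 1) (hb : b ≤ 1) : |a - b| + (a + b) ≤ 2 := by
  rcases abs_cases (a - b) with ⟨h, _⟩ | ⟨h, _⟩ <;> linarith

lemma abs_sub_eq_one_iff (ha : a ∈ Set.Icc (0 : ℝ) 1) (hb : b ∈ Set.Icc (0 : ℝ) 1) :
    |a - b| = 1 ↔ (a = 1 ∧ b = 0) ∨ (a = 0 ∧ b = 1) := by
  obtain ⟨ha0, ha1⟩ := ha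
  obtain ⟨hb0, hb1⟩ := hb
  rw [abs_eq zero_le_one]
  constructor
  · rintro (h | h)
    · exact Or.inl ⟨by linarith, by linarith⟩
    · exact Or.inr ⟨by linarith, by linarith⟩
  · rintro (⟨rfl, rfl⟩ | ⟨rfl, rfl⟩) <;> norm_num

end UnitInterval

section Aggregates

variable {D A S l1 l2 : ℝ}

lemma abs_sub_mul_add_mul_abs_sub_one_bounds (hDA : |D| ≤ A) (hA0 : 0 ≤ A) (hA1 : A ≤ 1)
    (hS : 1 ≤ S) (hAS : A + S ≤ 2) (hl1 : 0 ≤ l1) (hl2 : 0 ≤ l2) (hl : 1 ≤ l1 + l2) :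
    -l1 ≤ |D| - l1 * A + l2 * |S - 1| ∧ |D| - l1 * A + l2 * |S - 1| ≤ l2 := by
  rw [abs_of_nonneg (sub_nonneg.mpr hS)]
  constructor <;> nlinarith [abs_nonneg D]

lemma abs_sub_mul_add_mul_abs_sub_one_eq_neg_iff (hA1 : A ≤ 1)
    (hS : 1 ≤ S) (hAS : A + S ≤ 2) (hl1 : 0 < l1) (hl2 : 0 ≤ l2) :
    |D| - l1 * A + l2 * |S - 1| = -l1 ↔ D = 0 ∧ A = 1 := by
  rw [abs_of_nonneg (sub_nonneg.mpr hS)]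
  constructor
  · intro hJ
    have hA : A = 1 := by nlinarith [abs_nonneg D]
    subst hA
    exact ⟨abs_eq_zero.mp (by nlinarith [abs_nonneg D]), rfl⟩
  · rintro ⟨rfl, rfl⟩
    have : S = 1 := by linarith
    simp [this]

end Aggregates

theorem ldsm_binary_objective_bounds_and_min_general
    (K : ℕ)
    (lam1 lam2 : ℝ) (hlam1 : 0 < lam1) (hlam2 : 0 ≤ lam2) (hlam : 1 ≤ lam1 + lam2)
    (π PR PL : Fin K → ℝ)
    (hπpos : ∀ i, 0 < π i) (hπsum : ∑ i, π i = 1)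
    (hPR : ∀ i, PR i ∈ Set.Icc (0 : ℝ) 1)
    (hPL : ∀ i, PL i ∈ Set.Icc (0 : ℝ) 1)
    (hRL : ∀ i, 1 ≤ PR i + PL i) :
    let PRbar : ℝ := ∑ i, π i * PR i
    let PLbar : ℝ := ∑ i, π i * PL i
    let J : ℝ := |PRbar - PLbar| - lam1 * (∑ i, π i * |PR i - PL i|)
      + lam2 * |PRbar + PLbar - 1|
    (-lam1 ≤ J ∧ J ≤ lam2) ∧
      (J = -lam1 ↔
        (PRbar = PLbar ∧
          ∀ i, (PR i = 1 ∧ PL i = 0) ∨ (PR i = 0 ∧ PL i = 1))) := by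
  intro PRbar PLbar J
  have hπ : ∀ i, 0 ≤ π i := fun i => (hπpos i).le
  have habs : ∀ i, |PR i - PL i| ≤ 1 := fun i =>
    abs_sub_le_of_nonneg_of_le (hPR i).1 (hPR i).2 (hPL i).1 (hPL i).2
  have hD : PRbar - PLbar = ∑ i, π i * (PR i - PL i) := by
    simp only [PRbar, PLbar, ← sum_sub_distrib, mul_sub]
  have hS : PRbar + PLbar = ∑ i, π i * (PR i + PL i) := by
    simp only [PRbar, PLbar, ← sum_add_distrib, mul_add]
  set A := ∑ i, π i * |PR i - PL i|
  have hDA : |PRbar - PLbar| ≤ A := by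
    rw [hD]
    refine (abs_sum_le_sum_abs _ _).trans_eq (sum_congr rfl fun i _ => ?_)
    rw [abs_mul, abs_of_nonneg (hπ i)]
  have hAS : A + (PRbar + PLbar) ≤ 2 := by
    rw [hS, ← sum_add_distrib]
    simp only [← mul_add]
    exact sum_mul_le_of_forall_le hπ hπsum fun i => abs_sub_add_add_le_two (hPR i).2 (hPL i).2
  have hA0 : 0 ≤ A := sum_nonneg fun i _ => mul_nonneg (hπ i) (abs_nonneg _)
  have hA1 : A ≤ 1 := sum_mul_le_of_forall_le hπ hπsum habs
  have hS1 : 1 ≤ PRbar + PLbar := hS ▸ le_sum_mul_of_forall_le hπ hπsum hRL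
  have hpure : A = 1 ↔ ∀ i, (PR i = 1 ∧ PL i = 0) ∨ (PR i = 0 ∧ PL i = 1) :=
    (sum_mul_eq_iff_forall_eq hπpos hπsum habs).trans
      (forall_congr' fun i => abs_sub_eq_one_iff (hPR i) (hPL i))
  refine ⟨abs_sub_mul_add_mul_abs_sub_one_bounds hDA hA0 hA1 hS1 hAS hlam1.le hlam2 hlam,
    (abs_sub_mul_add_mul_abs_sub_one_eq_neg_iff hA1 hS1 hAS hlam1 hlam2).trans ?_⟩
  rw [sub_eq_zero, hpure]

/-- Bounds and minimizer characterization for the binary LdSM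
node objective.  Assume `λ1 > 0`, `λ2 ≥ 0` with `λ1 + λ2 ≥ 1`, and `π i > 0`
for every class `i` (with weights in `[0,1]` summing to `1`).  Then for all
conditional probabilities `P_R^i, P_L^i ∈ [0,1]` satisfying
`P_R^i + P_L^i ≥ 1`, the binary objective `J` satisfies `−λ1 ≤ J ≤ λ2`, and
`J = −λ1` if and only if the split is perfectly balanced (`P_R = P_L`) and
perfectly pure (for every class exactly one of `P_R^i, P_L^i` is `1` and the
other is `0`). -/
theorem ldsm_binary_objective_bounds_and_min
    (K : ℕ) (hK : 1 ≤ K)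
    (lam1 lam2 : ℝ) (hlam1 : 0 < lam1) (hlam2 : 0 ≤ lam2) (hlam : 1 ≤ lam1 + lam2)
    (π PR PL : Fin K → ℝ)
    (hπpos : ∀ i, 0 < π i) (hπle : ∀ i, π i ≤ 1) (hπsum : ∑ i, π i = 1)
    (hPR : ∀ i, PR i ∈ Set.Icc (0 : ℝ) 1)
    (hPL : ∀ i, PL i ∈ Set.Icc (0 : ℝ) 1)
    (hRL : ∀ i, 1 ≤ PR i + PL i) :
    let PRbar : ℝ := ∑ i, π i * PR i
    let PLbar : ℝ := ∑ i, π i * PL i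
    let J : ℝ := |PRbar - PLbar| - lam1 * (∑ i, π i * |PR i - PL i|)
      + lam2 * |PRbar + PLbar - 1|
    (-lam1 ≤ J ∧ J ≤ lam2) ∧
      (J = -lam1 ↔
        (PRbar = PLbar ∧
          ∀ i, (PR i = 1 ∧ PL i = 0) ∨ (PR i = 0 ∧ PL i = 1))) :=
  ldsm_binary_objective_bounds_and_min_general K lam1 lam2 hlam1 hlam2 hlam π PR PL hπpos hπsum hPR
    hPL hRL
end

section
/- Let M ≥ 2 and assume λ1 > 0, λ2 ≥ 0 with (M − 3)·λ1 < λ2, and assume π_i > 0 for every class i. Then for all admissible conditional probabilities P_j^i, the M-ary objective J satisfies J ≥ −λ1(M − 1), with equality if and only if the split is perfectly balanced and perfectly pure. If in addition λ1 ≥ 1, then J ≤ λ2(M − 1). -/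
/-!
Write `|a - b| = a + b - 2 min a b`. For a row `p ∈ [0,1]^M` with sum `s`, the spread
`∑_{j<l} |p_j - p_l|` becomes `(M - 1) s - 2A` with `A = ∑_{j<l} min p_j p_l`, and pairing the
largest entry with all the others gives `A ≥ s - max p ≥ s - 1`. Hence `J + λ₁(M - 1)` is the
spread of the mixture `P̄` plus a `π`-weighted sum of the per-class terms
`2λ₁(A - (s - 1)) + (λ₂ - (M - 3)λ₁)(s - 1)`, all nonnegative, and a term vanishes exactly when
`s = 1` and `A = 0`, i.e. when the row is one-hot. The upper bound is the triangle inequality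
`spread P̄ ≤ ∑ π_i spread P^i` together with `∑_j P̄_j ≤ M`.
-/

open Finset

section PairSum

variable {ι : Type*} [Fintype ι] [LinearOrder ι]

def pairSum (g : ι → ι → ℝ) : ℝ :=
  ∑ j, ∑ l ∈ univ.filter (j < ·), g j l

lemma pairSum_nonneg {g : ι → ι → ℝ} (hg : ∀ j l, 0 ≤ g j l) : 0 ≤ pairSum g :=
  sum_nonneg fun j _ => sum_nonneg fun l _ => hg j l

lemma pairSum_eq_zero_iff {g : ι → ι → ℝ} (hg : ∀ j l, 0 ≤ g j l) :
    pairSum g = 0 ↔ ∀ j l, j < l → g j l = 0 := by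
  rw [pairSum, sum_eq_zero_iff_of_nonneg fun j _ => sum_nonneg fun l _ => hg j l]
  simp [sum_eq_zero_iff_of_nonneg fun l _ => hg _ l]

lemma pairSum_mono {g h : ι → ι → ℝ} (hgh : ∀ j l, g j l ≤ h j l) : pairSum g ≤ pairSum h :=
  sum_le_sum fun j _ => sum_le_sum fun l _ => hgh j l

lemma pairSum_add (g h : ι → ι → ℝ) :
    pairSum (fun j l => g j l + h j l) = pairSum g + pairSum h := by
  simp only [pairSum, sum_add_distrib]

lemma pairSum_sub (g h : ι → ι → ℝ) :
    pairSum (fun j l => g j l - h j l) = pairSum g - pairSum h := by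
  simp only [pairSum, sum_sub_distrib]

lemma mul_pairSum (c : ℝ) (g : ι → ι → ℝ) : c * pairSum g = pairSum (fun j l => c * g j l) := by
  simp only [pairSum, mul_sum]

lemma pairSum_sum {κ : Type*} [Fintype κ] (f : κ → ι → ι → ℝ) :
    pairSum (fun j l => ∑ i, f i j l) = ∑ i, pairSum (f i) := by
  simp only [pairSum]
  rw [sum_comm]
  exact sum_congr rfl fun j _ => sum_comm

lemma pairSum_eq_sum_sum_lt (g : ι → ι → ℝ) :
    pairSum g = ∑ l, ∑ j ∈ univ.filter (· < l), g j l :=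
  sum_comm' (by simp)

lemma sum_filter_lt_add_sum_filter_gt (j : ι) (f : ι → ℝ) :
    ∑ l ∈ univ.filter (· < j), f l + ∑ l ∈ univ.filter (j < ·), f l
      = ∑ l ∈ univ.erase j, f l := by
  rw [← sum_union (disjoint_filter.2 fun l _ h h' => lt_asymm h h')]
  congr 1
  ext l
  simp [or_comm, eq_comm (a := j)]

lemma two_mul_pairSum {g : ι → ι → ℝ} (hg : ∀ j l, g j l = g l j) :
    2 * pairSum g = ∑ j, ∑ l ∈ univ.erase j, g j l := by
  rw [two_mul]
  nth_rewrite 1 [pairSum_eq_sum_sum_lt]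
  simp only [pairSum, ← sum_add_distrib, ← sum_filter_lt_add_sum_filter_gt]
  exact sum_congr rfl fun j _ => congrArg (· + _) (sum_congr rfl fun l _ => hg l j)

lemma pairSum_add_self (p : ι → ℝ) :
    pairSum (fun j l => p j + p l) = (Fintype.card ι - 1) * ∑ j, p j := by
  rw [pairSum_add, pairSum_eq_sum_sum_lt (fun _ l => p l), pairSum, mul_sum, ← sum_add_distrib]
  refine sum_congr rfl fun j _ => ?_
  rw [add_comm, sum_filter_lt_add_sum_filter_gt, sum_const, card_erase_of_mem (mem_univ j),
    card_univ, nsmul_eq_mul, Nat.cast_pred (Fintype.card_pos_iff.2 ⟨j⟩)]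

lemma sum_erase_le_pairSum {g : ι → ι → ℝ} (hg : ∀ j l, g j l = g l j) (hg0 : ∀ j l, 0 ≤ g j l)
    (m : ι) : ∑ l ∈ univ.erase m, g m l ≤ pairSum g := by
  have hcol : ∑ j ∈ univ.erase m, g m j ≤ ∑ j ∈ univ.erase m, ∑ l ∈ univ.erase j, g j l :=
    sum_le_sum fun j hj => hg m j ▸
      single_le_sum (fun l _ => hg0 j l)
        (mem_erase.2 ⟨fun h => (ne_of_mem_erase hj) h.symm, mem_univ m⟩)
  have := two_mul_pairSum hg
  rw [← add_sum_erase _ _ (mem_univ m)] at this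
  linarith

lemma sum_sub_one_le_pairSum_min {p : ι → ℝ} (hp : ∀ j, p j ≤ 1) (hp0 : ∀ j, 0 ≤ p j) :
    ∑ j, p j - 1 ≤ pairSum (fun j l => min (p j) (p l)) := by
  rcases isEmpty_or_nonempty ι with hι | hι
  · simp [pairSum]
  obtain ⟨m, -, hm⟩ := exists_max_image univ p univ_nonempty
  calc ∑ j, p j - 1 ≤ ∑ j, p j - p m := by linarith [hp m]
    _ = ∑ l ∈ univ.erase m, min (p m) (p l) := by
      rw [← sum_erase_eq_sub (mem_univ m)]
      exact sum_congr rfl fun l _ => (min_eq_right (hm l (mem_univ l))).symm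
    _ ≤ _ := sum_erase_le_pairSum (fun _ _ => min_comm _ _) (fun j l => le_min (hp0 j) (hp0 l)) m

def spread (p : ι → ℝ) : ℝ := pairSum fun j l => |p j - p l|

lemma spread_nonneg (p : ι → ℝ) : 0 ≤ spread p :=
  pairSum_nonneg fun _ _ => abs_nonneg _

lemma spread_eq_zero_iff {p : ι → ℝ} : spread p = 0 ↔ ∀ j l, p j = p l := by
  rw [spread, pairSum_eq_zero_iff fun _ _ => abs_nonneg _]
  simp only [abs_eq_zero, sub_eq_zero]
  refine ⟨fun h j l => ?_, fun h j l _ => h j l⟩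
  rcases lt_trichotomy j l with hjl | rfl | hlj
  exacts [h j l hjl, rfl, (h l j hlj).symm]

lemma spread_eq (p : ι → ℝ) :
    spread p = (Fintype.card ι - 1) * ∑ j, p j - 2 * pairSum (fun j l => min (p j) (p l)) := by
  have habs : ∀ a b : ℝ, |a - b| = a + b - 2 * min a b := fun a b => by
    rw [← max_sub_min_eq_abs', ← min_add_max a b]; ring
  rw [← pairSum_add_self, mul_pairSum, ← pairSum_sub, spread]
  simp only [habs]

def IsOneHot (p : ι → ℝ) : Prop := ∃ j, p j = 1 ∧ ∀ l, l ≠ j → p l = 0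

lemma sum_eq_one_and_pairSum_min_eq_zero_iff {p : ι → ℝ} (hp0 : ∀ j, 0 ≤ p j) :
    (∑ j, p j = 1 ∧ pairSum (fun j l => min (p j) (p l)) = 0) ↔ IsOneHot p := by
  have hmin : ∀ j l, 0 ≤ min (p j) (p l) := fun j l => le_min (hp0 j) (hp0 l)
  rw [pairSum_eq_zero_iff hmin]
  constructor
  · rintro ⟨hs, hA⟩
    obtain ⟨j, -, hj⟩ := exists_ne_zero_of_sum_ne_zero (hs.symm ▸ one_ne_zero : ∑ j, p j ≠ 0)
    have hj0 : 0 < p j := lt_of_le_of_ne (hp0 j) (Ne.symm hj)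
    have hzero : ∀ l, l ≠ j → p l = 0 := by
      intro l hl
      by_contra hl0
      have hpos : 0 < min (p j) (p l) := lt_min hj0 (lt_of_le_of_ne (hp0 l) (Ne.symm hl0))
      rcases lt_or_gt_of_ne hl with h | h
      · exact hpos.ne' (min_comm (p j) (p l) ▸ hA l j h)
      · exact hpos.ne' (hA j l h)
    exact ⟨j, by rwa [Fintype.sum_eq_single j hzero] at hs, hzero⟩
  · rintro ⟨j, hj, hzero⟩
    refine ⟨by rwa [Fintype.sum_eq_single j hzero], fun a b hab => ?_⟩
    rcases eq_or_ne a j with rfl | ha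
    · rw [hzero b hab.ne', min_eq_right (hp0 a)]
    · rw [hzero a ha, min_eq_left (hp0 b)]

end PairSum

section Mixture

variable {ι κ : Type*} [Fintype κ]

def mix (π : κ → ℝ) (P : κ → ι → ℝ) (j : ι) : ℝ := ∑ i, π i * P i j

lemma sum_mix [Fintype ι] (π : κ → ℝ) (P : κ → ι → ℝ) :
    ∑ j, mix π P j = ∑ i, π i * ∑ j, P i j := by
  simp only [mix, mul_sum]
  exact sum_comm

lemma one_le_sum_mix [Fintype ι] {π : κ → ℝ} {P : κ → ι → ℝ} (hπ0 : ∀ i, 0 ≤ π i)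
    (hπsum : ∑ i, π i = 1) (hrow : ∀ i, 1 ≤ ∑ j, P i j) : 1 ≤ ∑ j, mix π P j := by
  rw [sum_mix, ← hπsum]
  exact sum_le_sum fun i _ => le_mul_of_one_le_right (hπ0 i) (hrow i)

lemma mix_le_one {π : κ → ℝ} {P : κ → ι → ℝ} (hπ0 : ∀ i, 0 ≤ π i) (hπsum : ∑ i, π i = 1)
    (hP : ∀ i j, P i j ≤ 1) (j : ι) : mix π P j ≤ 1 :=
  hπsum ▸ sum_le_sum fun i _ => mul_le_of_le_one_right (hπ0 i) (hP i j)

end Mixture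

section Objective

variable {ι κ : Type*} [Fintype ι] [LinearOrder ι] [Fintype κ]

lemma spread_mix_le {π : κ → ℝ} (hπ0 : ∀ i, 0 ≤ π i) (P : κ → ι → ℝ) :
    spread (mix π P) ≤ ∑ i, π i * spread (P i) := by
  simp only [spread, mul_pairSum, ← pairSum_sum]
  refine pairSum_mono fun j l => ?_
  simp only [mix, ← sum_sub_distrib, ← mul_sub]
  refine (abs_sum_le_sum_abs _ _).trans_eq (sum_congr rfl fun i _ => ?_)
  rw [abs_mul, abs_of_nonneg (hπ0 i)]

variable (lam1 lam2 : ℝ)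

def ldsmObjective (π : κ → ℝ) (P : κ → ι → ℝ) : ℝ :=
  spread (mix π P) - lam1 * ∑ i, π i * spread (P i) + lam2 * |∑ j, mix π P j - 1|

def rowSlack (p : ι → ℝ) : ℝ :=
  lam1 * (Fintype.card ι - 1 - spread p) + lam2 * (∑ j, p j - 1)

lemma ldsmObjective_add_eq {π : κ → ℝ} {P : κ → ι → ℝ} (hπsum : ∑ i, π i = 1)
    (hS : 1 ≤ ∑ j, mix π P j) :
    ldsmObjective lam1 lam2 π P + lam1 * (Fintype.card ι - 1)
      = spread (mix π P) + ∑ i, π i * rowSlack lam1 lam2 (P i) := by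
  have hslack : ∑ i, π i * rowSlack lam1 lam2 (P i)
      = lam1 * (Fintype.card ι - 1) * ∑ i, π i - lam1 * ∑ i, π i * spread (P i)
        + lam2 * (∑ i, π i * ∑ j, P i j - ∑ i, π i) := by
    simp only [rowSlack, mul_sum, ← sum_sub_distrib, ← sum_add_distrib]
    exact sum_congr rfl fun i _ => by rw [← mul_sum]; ring
  rw [ldsmObjective, abs_of_nonneg (sub_nonneg.2 hS), hslack, sum_mix, hπsum]
  ring

variable {lam1 lam2}

lemma ldsmObjective_le {π : κ → ℝ} {P : κ → ι → ℝ} (hlam1 : 1 ≤ lam1) (hlam2 : 0 ≤ lam2)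
    (hπ0 : ∀ i, 0 ≤ π i) (hπsum : ∑ i, π i = 1) (hP : ∀ i j, P i j ≤ 1)
    (hrow : ∀ i, 1 ≤ ∑ j, P i j) :
    ldsmObjective lam1 lam2 π P ≤ lam2 * (Fintype.card ι - 1) := by
  have hW : 0 ≤ ∑ i, π i * spread (P i) :=
    sum_nonneg fun i _ => mul_nonneg (hπ0 i) (spread_nonneg _)
  have hS : 1 ≤ ∑ j, mix π P j := one_le_sum_mix hπ0 hπsum hrow
  have hSM : ∑ j, mix π P j ≤ Fintype.card ι := by
    simpa using sum_le_sum fun j (_ : j ∈ univ) => mix_le_one hπ0 hπsum hP j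
  rw [ldsmObjective, abs_of_nonneg (sub_nonneg.2 hS)]
  linarith [spread_mix_le hπ0 P, mul_nonneg (sub_nonneg.2 hlam1) hW,
    mul_le_mul_of_nonneg_left (sub_le_sub_right hSM 1) hlam2]

lemma rowSlack_eq (p : ι → ℝ) :
    rowSlack lam1 lam2 p = 2 * lam1 * (pairSum (fun j l => min (p j) (p l)) - (∑ j, p j - 1))
      + (lam2 - (Fintype.card ι - 3) * lam1) * (∑ j, p j - 1) := by
  rw [rowSlack, spread_eq]
  ring

lemma rowSlack_nonneg (hlam1 : 0 ≤ lam1) (hcond : (Fintype.card ι - 3) * lam1 ≤ lam2)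
    {p : ι → ℝ} (hp : ∀ j, p j ≤ 1) (hp0 : ∀ j, 0 ≤ p j) (hs : 1 ≤ ∑ j, p j) :
    0 ≤ rowSlack lam1 lam2 p := by
  rw [rowSlack_eq]
  have := sum_sub_one_le_pairSum_min hp hp0
  have := sub_nonneg.2 hcond
  positivity

lemma rowSlack_eq_zero_iff (hlam1 : 0 < lam1) (hcond : (Fintype.card ι - 3) * lam1 < lam2)
    {p : ι → ℝ} (hp : ∀ j, p j ≤ 1) (hp0 : ∀ j, 0 ≤ p j) (hs : 1 ≤ ∑ j, p j) :
    rowSlack lam1 lam2 p = 0 ↔ IsOneHot p := by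
  have hA := sub_nonneg.2 (sum_sub_one_le_pairSum_min hp hp0)
  have hc := sub_pos.2 hcond
  rw [← sum_eq_one_and_pairSum_min_eq_zero_iff hp0, rowSlack_eq,
    add_eq_zero_iff_of_nonneg (by positivity) (by positivity)]
  simp only [mul_eq_zero, hlam1.ne', hc.ne', false_or, OfNat.ofNat_ne_zero]
  constructor <;> rintro ⟨h₁, h₂⟩ <;> constructor <;> linarith

end Objective

theorem ldsm_mary_objective_bounds_and_min_general
    (M K : ℕ)
    (lam1 lam2 : ℝ) (hlam1 : 0 < lam1) (hlam2 : 0 ≤ lam2)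
    (hcond : ((M : ℝ) - 3) * lam1 < lam2)
    (π : Fin K → ℝ) (P : Fin K → Fin M → ℝ)
    (hπpos : ∀ i, 0 < π i) (hπsum : ∑ i, π i = 1)
    (hP : ∀ i j, P i j ∈ Set.Icc (0 : ℝ) 1)
    (hrow : ∀ i, 1 ≤ ∑ j, P i j) :
    let Pbar : Fin M → ℝ := fun j => ∑ i, π i * P i j
    let J : ℝ :=
      (∑ j, ∑ l ∈ Finset.univ.filter (fun l => j < l), |Pbar j - Pbar l|)
      - lam1 * (∑ i, π i *
          (∑ j, ∑ l ∈ Finset.univ.filter (fun l => j < l), |P i j - P i l|))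
      + lam2 * |(∑ j, Pbar j) - 1|
    (-(lam1 * ((M : ℝ) - 1)) ≤ J) ∧
      (J = -(lam1 * ((M : ℝ) - 1)) ↔
        ((∀ j l, Pbar j = Pbar l) ∧
          ∀ i, ∃ j, P i j = 1 ∧ ∀ l, l ≠ j → P i l = 0)) ∧
      (1 ≤ lam1 → J ≤ lam2 * ((M : ℝ) - 1)) := by
  intro Pbar J
  have hJ : J = ldsmObjective lam1 lam2 π P := rfl
  have hP1 : ∀ i j, P i j ≤ 1 := fun i j => (hP i j).2
  have hP0 : ∀ i j, 0 ≤ P i j := fun i j => (hP i j).1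
  have hπ0 : ∀ i, 0 ≤ π i := fun i => (hπpos i).le
  have hM : (M : ℝ) = Fintype.card (Fin M) := by simp
  rw [hM] at hcond ⊢
  have hslack : ∀ i ∈ univ, 0 ≤ π i * rowSlack lam1 lam2 (P i) := fun i _ =>
    mul_nonneg (hπ0 i) (rowSlack_nonneg hlam1.le hcond.le (hP1 i) (hP0 i) (hrow i))
  have hsum := ldsmObjective_add_eq lam1 lam2 hπsum (one_le_sum_mix hπ0 hπsum hrow)
  rw [hJ]
  refine ⟨?_, ?_, fun h => ldsmObjective_le h hlam2 hπ0 hπsum hP1 hrow⟩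
  · linarith [spread_nonneg (mix π P), sum_nonneg hslack]
  · calc _ ↔ spread (mix π P) + ∑ i, π i * rowSlack lam1 lam2 (P i) = 0 := by
          constructor <;> intro h <;> linarith
      _ ↔ spread (mix π P) = 0 ∧ ∀ i, rowSlack lam1 lam2 (P i) = 0 := by
          rw [add_eq_zero_iff_of_nonneg (spread_nonneg _) (sum_nonneg hslack),
            sum_eq_zero_iff_of_nonneg hslack]
          simp [(hπpos _).ne']
      _ ↔ _ := and_congr spread_eq_zero_iff
          (forall_congr' fun i => rowSlack_eq_zero_iff hlam1 hcond (hP1 i) (hP0 i) (hrow i))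

/-- Minimum of the `M`-ary LdSM node objective.  Let `M ≥ 2`,
`λ1 > 0`, `λ2 ≥ 0` with `(M − 3)·λ1 < λ2`, and `π i > 0` for every class.
Then for all admissible conditional probabilities `P_j^i` the objective
satisfies `J ≥ −λ1(M − 1)`, with equality iff the split is perfectly balanced
(`P_1 = ⋯ = P_M`) and perfectly pure (every class is routed deterministically
to a single child).  If in addition `λ1 ≥ 1`, then `J ≤ λ2(M − 1)`. -/
theorem ldsm_mary_objective_bounds_and_min
    (M K : ℕ) (hM : 2 ≤ M) (hK : 1 ≤ K)
    (lam1 lam2 : ℝ) (hlam1 : 0 < lam1) (hlam2 : 0 ≤ lam2)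
    (hcond : ((M : ℝ) - 3) * lam1 < lam2)
    (π : Fin K → ℝ) (P : Fin K → Fin M → ℝ)
    (hπpos : ∀ i, 0 < π i) (hπle : ∀ i, π i ≤ 1) (hπsum : ∑ i, π i = 1)
    (hP : ∀ i j, P i j ∈ Set.Icc (0 : ℝ) 1)
    (hrow : ∀ i, 1 ≤ ∑ j, P i j) :
    let Pbar : Fin M → ℝ := fun j => ∑ i, π i * P i j
    let J : ℝ :=
      (∑ j, ∑ l ∈ Finset.univ.filter (fun l => j < l), |Pbar j - Pbar l|)
      - lam1 * (∑ i, π i *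
          (∑ j, ∑ l ∈ Finset.univ.filter (fun l => j < l), |P i j - P i l|))
      + lam2 * |(∑ j, Pbar j) - 1|
    (-(lam1 * ((M : ℝ) - 1)) ≤ J) ∧
      (J = -(lam1 * ((M : ℝ) - 1)) ↔
        ((∀ j l, Pbar j = Pbar l) ∧
          ∀ i, ∃ j, P i j = 1 ∧ ∀ l, l ≠ j → P i l = 0)) ∧
      (1 ≤ lam1 → J ≤ lam2 * ((M : ℝ) - 1)) :=
  ldsm_mary_objective_bounds_and_min_general M K lam1 lam2 hlam1 hlam2 hcond π P hπpos hπsum hP hrow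
end

section
/- If the node split is perfectly pure, then β ≤ J − J*, where J* = −λ1(M − 1) is the minimum possible value of the objective. Equivalently, for a perfectly pure split one has Σ_{i=1}^K π_i Σ_{1≤j<l≤M} |P_j^i − P_l^i| = M − 1 and |(Σ_{j=1}^M P_j) − 1| = 0, so J − J* equals the balancing term Σ_{1≤j<l≤M} |P_j − P_l|, and this term is at least β. -/
/-!
In a pure split every row `P i` is the indicator of a single child, so its pairwise spread is
`M - 1` and it sums to one; hence the purity and normalisation terms of `J` are constant and `J - J*`
is the balancing term. For `β`, the deviation of `P̄ⱼ` from the mean is the average of the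
differences `P̄ⱼ - P̄ₗ`, hence at most `(∑ⱼ ∑ₗ |P̄ⱼ - P̄ₗ|) / M`, and for `M ≥ 2` this is at most half
the double sum, which is the sum over pairs `j < l`.
-/

open Finset

theorem abs_sub_eq_of_zero_or_one {x y : ℝ} (hx : x = 0 ∨ x = 1) (hy : y = 0 ∨ y = 1) :
    |x - y| = x + y - 2 * x * y := by
  rcases hx with rfl | rfl <;> rcases hy with rfl | rfl <;> norm_num

theorem sum_sum_abs_sub_of_indicator {ι : Type*} [Fintype ι] (a : ι → ℝ)
    (h01 : ∀ j, a j = 0 ∨ a j = 1) (hsum : ∑ j, a j = 1) :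
    ∑ j, ∑ l, |a j - a l| = 2 * (Fintype.card ι - 1) := by
  simp [abs_sub_eq_of_zero_or_one (h01 _) (h01 _), sum_sub_distrib, sum_add_distrib, mul_assoc,
    ← mul_sum, hsum]
  ring

theorem abs_sub_average_le {ι : Type*} [Fintype ι] (a : ι → ℝ) (j : ι) :
    |a j - (∑ l, a l) / Fintype.card ι| ≤ (∑ j', ∑ l, |a j' - a l|) / Fintype.card ι := by
  have hcard : (0 : ℝ) < Fintype.card ι := by exact_mod_cast Fintype.card_pos_iff.mpr ⟨j⟩
  have hdev : a j - (∑ l, a l) / Fintype.card ι = (∑ l, (a j - a l)) / Fintype.card ι := by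
    rw [sum_sub_distrib, sum_const, card_univ, nsmul_eq_mul]
    field_simp
  rw [hdev, abs_div, abs_of_pos hcard]
  gcongr
  calc |∑ l, (a j - a l)| ≤ ∑ l, |a j - a l| := abs_sum_le_sum_abs _ _
    _ ≤ ∑ j', ∑ l, |a j' - a l| :=
      single_le_sum (f := fun j' => ∑ l, |a j' - a l|)
        (fun _ _ => sum_nonneg fun _ _ => abs_nonneg _) (mem_univ j)

section PairSums

variable {ι : Type*} [Fintype ι] [LinearOrder ι] [LocallyFiniteOrderTop ι]
  [LocallyFiniteOrderBot ι]

theorem Finset.sum_sum_eq_sum_sum_Ioi_add {β : Type*} [AddCommMonoid β] (f : ι → ι → β) :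
    ∑ j, ∑ l, f j l = ∑ j, ∑ l ∈ Ioi j, (f j l + f l j) + ∑ j, f j j := by
  have hrow (j : ι) : ∑ l, f j l = ∑ l ∈ Ioi j, f j l + ∑ l ∈ Iio j, f j l + f j j := by
    rw [Fintype.sum_eq_sum_compl_add j, ← Ioi_disjUnion_Iio, sum_disjUnion]
  have hflip : ∑ j, ∑ l ∈ Iio j, f j l = ∑ j, ∑ l ∈ Ioi j, f l j :=
    sum_comm' fun _ _ => by simp [and_comm]
  simp only [hrow, sum_add_distrib, hflip]

theorem Finset.two_mul_sum_sum_Ioi_abs_sub (a : ι → ℝ) :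
    2 * ∑ j, ∑ l ∈ Ioi j, |a j - a l| = ∑ j, ∑ l, |a j - a l| := by
  rw [sum_sum_eq_sum_sum_Ioi_add]
  simp only [sub_self, abs_zero, sum_const_zero, add_zero, mul_sum]
  exact sum_congr rfl fun j _ => sum_congr rfl fun l _ => by rw [abs_sub_comm (a l), two_mul]

theorem abs_sub_average_le_sum_sum_Ioi_abs_sub (hcard : 2 ≤ Fintype.card ι)
    (a : ι → ℝ) (j : ι) :
    |a j - (∑ l, a l) / Fintype.card ι| ≤ ∑ j, ∑ l ∈ Ioi j, |a j - a l| := by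
  calc |a j - (∑ l, a l) / Fintype.card ι| ≤ (∑ j', ∑ l, |a j' - a l|) / Fintype.card ι :=
        abs_sub_average_le a j
    _ ≤ (∑ j', ∑ l, |a j' - a l|) / 2 := by gcongr; exact_mod_cast hcard
    _ = ∑ j, ∑ l ∈ Ioi j, |a j - a l| := by rw [← two_mul_sum_sum_Ioi_abs_sub]; ring

end PairSums

/-- If the node split is perfectly pure (every class is
routed deterministically to exactly one child) then
`Σ_i π_i Σ_{j<l} |P_j^i − P_l^i| = M − 1` and `|(Σ_j P_j) − 1| = 0`, so that
`J − J*` (with `J* = −λ1(M−1)` the minimum possible objective value) equals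
the balancing term `Σ_{j<l} |P_j − P_l|`, and the balancedness factor
`β = max_j |P_j − (Σ_l P_l)/M|` satisfies `β ≤ J − J*`. -/
theorem ldsm_pure_split_beta_le_J_sub_Jstar
    (M K : ℕ) (hM : 2 ≤ M)
    (lam1 lam2 : ℝ)
    (π : Fin K → ℝ) (P : Fin K → Fin M → ℝ)
    (hπsum : ∑ i, π i = 1)
    (hpure : ∀ i, ∃ j, P i j = 1 ∧ ∀ l, l ≠ j → P i l = 0) :
    let Pbar : Fin M → ℝ := fun j => ∑ i, π i * P i j
    let J : ℝ :=
      (∑ j, ∑ l ∈ Finset.univ.filter (fun l => j < l), |Pbar j - Pbar l|)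
      - lam1 * (∑ i, π i *
          (∑ j, ∑ l ∈ Finset.univ.filter (fun l => j < l), |P i j - P i l|))
      + lam2 * |(∑ j, Pbar j) - 1|
    let Jstar : ℝ := -(lam1 * ((M : ℝ) - 1))
    let β : ℝ := Finset.univ.sup' ⟨⟨0, by omega⟩, Finset.mem_univ _⟩
      (fun j => |Pbar j - (∑ l, Pbar l) / (M : ℝ)|)
    (∑ i, π i *
        (∑ j, ∑ l ∈ Finset.univ.filter (fun l => j < l), |P i j - P i l|))
      = (M : ℝ) - 1 ∧
    |(∑ j, Pbar j) - 1| = 0 ∧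
    J - Jstar
      = (∑ j, ∑ l ∈ Finset.univ.filter (fun l => j < l), |Pbar j - Pbar l|) ∧
    β ≤ J - Jstar := by
  intro Pbar J Jstar β
  simp only [filter_lt_eq_Ioi]
  have hrow (i : Fin K) : (∀ j, P i j = 0 ∨ P i j = 1) ∧ ∑ j, P i j = 1 := by
    obtain ⟨j₀, hone, hzero⟩ := hpure i
    refine ⟨fun j => ?_, by rw [sum_eq_single j₀ (fun l _ => hzero l) (by simp), hone]⟩
    rcases eq_or_ne j j₀ with rfl | hj
    exacts [Or.inr hone, Or.inl (hzero j hj)]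
  have hspread : ∑ i, π i * ∑ j, ∑ l ∈ Ioi j, |P i j - P i l| = M - 1 := by
    have h (i : Fin K) : ∑ j, ∑ l ∈ Ioi j, |P i j - P i l| = M - 1 := by
      have := sum_sum_abs_sub_of_indicator (P i) (hrow i).1 (hrow i).2
      rw [← two_mul_sum_sum_Ioi_abs_sub, Fintype.card_fin] at this
      linarith
    simp only [h, ← sum_mul, hπsum, one_mul]
  have hmass : ∑ j, Pbar j = 1 := by
    simp only [Pbar, sum_comm (γ := Fin M), ← mul_sum, (hrow _).2, mul_one, hπsum]
  have hbalance : |(∑ j, Pbar j) - 1| = 0 := by rw [hmass, sub_self, abs_zero]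
  have hgap : J - Jstar = ∑ j, ∑ l ∈ Ioi j, |Pbar j - Pbar l| := by
    simp only [J, Jstar, filter_lt_eq_Ioi, hspread, hbalance]
    ring
  refine ⟨hspread, hbalance, hgap, hgap ▸ sup'_le _ _ fun j _ => ?_⟩
  simpa using abs_sub_average_le_sum_sum_Ioi_abs_sub (by simpa using hM) Pbar j
end

section
/- Let M ≥ 2 be an integer, λ1 > 0, λ2 ≥ 0, and suppose (M − 3)·λ1 < λ2. Then for every integer n with 2 ≤ n ≤ M, one has −λ1(M − 1) < −λ1·n(M − n) + λ2·(n − 1). -/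
/-!
The gap between the two objective values factors as `(n - 1) * (λ2 - λ1 (M - n - 1))`.
For `n ≥ 2` the first factor is positive, and `λ1 (M - n - 1) ≤ λ1 (M - 3) < λ2` makes the
second one positive as well.
-/

theorem split_objective_sub_pure_objective {R : Type*} [CommRing R] (lam1 lam2 M n : R) :
    (-(lam1 * n * (M - n)) + lam2 * (n - 1)) - -(lam1 * (M - 1))
      = (n - 1) * (lam2 - lam1 * (M - n - 1)) := by
  ring

theorem pure_objective_lt_split_objective {K : Type*} [Field K] [LinearOrder K]
    [IsStrictOrderedRing K] {lam1 lam2 M n : K} (hlam1 : 0 ≤ lam1) (hn : 2 ≤ n)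
    (hcond : (M - 3) * lam1 < lam2) :
    -(lam1 * (M - 1)) < -(lam1 * n * (M - n)) + lam2 * (n - 1) := by
  have hsplit_pos : 0 < n - 1 := by linarith
  have hbound : lam1 * (M - n - 1) ≤ lam1 * (M - 3) :=
    mul_le_mul_of_nonneg_left (by linarith) hlam1
  have hgap_pos : 0 < (n - 1) * (lam2 - lam1 * (M - n - 1)) :=
    mul_pos hsplit_pos (by linarith)
  rw [← split_objective_sub_pure_objective] at hgap_pos
  exact sub_pos.mp hgap_pos

theorem ldsm_pure_configuration_strictly_better_general
    (M n : ℕ) (hn2 : 2 ≤ n)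
    (lam1 lam2 : ℝ) (hlam1 : 0 < lam1)
    (hcond : ((M : ℝ) - 3) * lam1 < lam2) :
    -(lam1 * ((M : ℝ) - 1))
      < -(lam1 * (n : ℝ) * ((M : ℝ) - (n : ℝ))) + lam2 * ((n : ℝ) - 1) :=
  pure_objective_lt_split_objective hlam1.le (by exact_mod_cast hn2) hcond

/-- Let `M ≥ 2` be an integer, `λ1 > 0`, `λ2 ≥ 0`, and
suppose `(M − 3)·λ1 < λ2`.  Then for every integer `n` with `2 ≤ n ≤ M`,
`−λ1(M − 1) < −λ1·n(M − n) + λ2·(n − 1)`. -/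
theorem ldsm_pure_configuration_strictly_better
    (M n : ℕ) (hM : 2 ≤ M) (hn2 : 2 ≤ n) (hnM : n ≤ M)
    (lam1 lam2 : ℝ) (hlam1 : 0 < lam1) (hlam2 : 0 ≤ lam2)
    (hcond : ((M : ℝ) - 3) * lam1 < lam2) :
    -(lam1 * ((M : ℝ) - 1))
      < -(lam1 * (n : ℝ) * ((M : ℝ) - (n : ℝ))) + lam2 * ((n : ℝ) - 1) :=
  ldsm_pure_configuration_strictly_better_general M n hn2 lam1 lam2 hlam1 hcond
end

section
/- Let q and s be probability distributions on a finite set of size K, let θ ∈ [0,1], and let H(p) = Σ_{i=1}^K p_i ln(1/p_i) denote the Shannon entropy (with the convention 0·ln(1/0) = 0). Then H(θq + (1−θ)s) − θH(q) − (1−θ)H(s) ≥ (θ(1−θ)/2)·(Σ_{i=1}^K |q_i − s_i|)². In particular, for θ = 1/2, H((q+s)/2) − (1/2)H(q) − (1/2)H(s) ≥ (1/8)·‖q − s‖_1². -/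
/-!
Write `m = θq + (1-θ)s`. The entropy gap `H(m) - θH(q) - (1-θ)H(s)` equals
`θ KL(q‖m) + (1-θ) KL(s‖m)`, where `KL(p‖m) = ∑ mᵢ klFun (pᵢ/mᵢ)`, and
`‖q - m‖₁ = (1-θ)‖q - s‖₁`, `‖s - m‖₁ = θ‖q - s‖₁`. Pinsker's inequality
`‖p - m‖₁² ≤ 2 KL(p‖m)` therefore bounds the gap below by
`(θ(1-θ)² + (1-θ)θ²)/2 ‖q - s‖₁² = θ(1-θ)/2 ‖q - s‖₁²`.

Pinsker's inequality follows from the pointwise bound `3(x-1)² ≤ (2x+4) klFun x` by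
Cauchy–Schwarz with the weights `(2pᵢ + 4mᵢ)/3`, which sum to `2`. The pointwise bound is
calculus: the derivative of the difference is `4((x+1) log x - 2(x-1))`, whose own derivative
`klFun x / x` is nonnegative, so it changes sign only at `x = 1`.
-/

open Real Finset InformationTheory

lemma hasDerivAt_add_one_mul_log_sub {x : ℝ} (hx : 0 < x) :
    HasDerivAt (fun y => (y + 1) * log y - 2 * (y - 1)) (klFun x / x) x := by
  have h := (((hasDerivAt_id x).add_const 1).mul (hasDerivAt_log hx.ne')).sub
    (((hasDerivAt_id x).sub_const 1).const_mul 2)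
  refine h.congr_deriv ?_
  rw [klFun_apply]
  field_simp
  simp only [id]
  ring

lemma monotoneOn_add_one_mul_log_sub :
    MonotoneOn (fun y => (y + 1) * log y - 2 * (y - 1)) (Set.Ioi 0) := by
  refine monotoneOn_of_deriv_nonneg (convex_Ioi 0)
    (fun y hy => (hasDerivAt_add_one_mul_log_sub hy).continuousAt.continuousWithinAt)
    (fun y hy => ?_) (fun y hy => ?_) <;> rw [interior_Ioi] at hy
  · exact (hasDerivAt_add_one_mul_log_sub hy).differentiableAt.differentiableWithinAt
  · rw [(hasDerivAt_add_one_mul_log_sub hy).deriv]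
    exact div_nonneg (klFun_nonneg hy.le) hy.le

lemma hasDerivAt_mul_klFun_sub {x : ℝ} (hx : 0 < x) :
    HasDerivAt (fun y => (2 * y + 4) * klFun y - 3 * (y - 1) ^ 2)
      (4 * ((x + 1) * log x - 2 * (x - 1))) x := by
  have h := ((((hasDerivAt_id x).const_mul 2).add_const 4).mul (hasDerivAt_klFun hx.ne')).sub
    ((((hasDerivAt_id x).sub_const 1).pow 2).const_mul 3)
  refine h.congr_deriv ?_
  simp only [id, klFun_apply]
  ring

lemma three_mul_sq_sub_one_le_mul_klFun {x : ℝ} (hx : 0 ≤ x) :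
    3 * (x - 1) ^ 2 ≤ (2 * x + 4) * klFun x := by
  set f : ℝ → ℝ := fun y => (2 * y + 4) * klFun y - 3 * (y - 1) ^ 2
  have hf1 : f 1 = 0 := by simp [f, klFun_one]
  have hcont : Continuous f := by fun_prop
  have hderiv : ∀ y, 0 < y → deriv f y = 4 * ((y + 1) * log y - 2 * (y - 1)) :=
    fun y hy => (hasDerivAt_mul_klFun_sub hy).deriv
  have hdiff : ∀ s : Set ℝ, s ⊆ Set.Ioi 0 → DifferentiableOn ℝ f s := fun s hs y hy =>
    (hasDerivAt_mul_klFun_sub (hs hy)).differentiableAt.differentiableWithinAt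
  suffices 0 ≤ f x by simpa [f, sub_nonneg] using this
  rw [← hf1]
  rcases le_total x 1 with hx1 | hx1
  · refine antitoneOn_of_deriv_nonpos (convex_Icc 0 1) hcont.continuousOn
      (hdiff _ (by rw [interior_Icc]; exact Set.Ioo_subset_Ioi_self)) (fun y hy => ?_)
      ⟨hx, hx1⟩ ⟨zero_le_one, le_rfl⟩ hx1
    rw [interior_Icc] at hy
    have := monotoneOn_add_one_mul_log_sub hy.1 (Set.mem_Ioi.2 one_pos) hy.2.le
    rw [hderiv y hy.1]
    norm_num at this ⊢
    linarith
  · refine monotoneOn_of_deriv_nonneg (convex_Ici 1) hcont.continuousOn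
      (hdiff _ (by rw [interior_Ici]; exact Set.Ioi_subset_Ioi zero_le_one)) (fun y hy => ?_)
      Set.self_mem_Ici hx1 hx1
    rw [interior_Ici] at hy
    have hy0 : (0 : ℝ) < y := one_pos.trans hy
    have := monotoneOn_add_one_mul_log_sub (Set.mem_Ioi.2 one_pos) hy0 hy.le
    rw [hderiv y hy0]
    norm_num at this ⊢
    linarith

lemma three_mul_sq_sub_le_mul_klFun {a b : ℝ} (ha : 0 ≤ a) (hb : 0 < b) :
    3 * (a - b) ^ 2 ≤ (2 * a + 4 * b) * (b * klFun (a / b)) := by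
  have hb' := hb.ne'
  calc 3 * (a - b) ^ 2 = b ^ 2 * (3 * (a / b - 1) ^ 2) := by field_simp
    _ ≤ b ^ 2 * ((2 * (a / b) + 4) * klFun (a / b)) :=
      mul_le_mul_of_nonneg_left (three_mul_sq_sub_one_le_mul_klFun (div_nonneg ha hb.le))
        (sq_nonneg b)
    _ = (2 * a + 4 * b) * (b * klFun (a / b)) := by field_simp

theorem sq_sum_abs_sub_le_two_mul_sum_klFun {ι : Type*} [Fintype ι] {p m : ι → ℝ}
    (hp0 : ∀ i, 0 ≤ p i) (hpsum : ∑ i, p i = 1) (hm0 : ∀ i, 0 ≤ m i) (hmsum : ∑ i, m i = 1)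
    (hpm : ∀ i, m i = 0 → p i = 0) :
    (∑ i, |p i - m i|) ^ 2 ≤ 2 * ∑ i, m i * klFun (p i / m i) := by
  have hweight : ∑ i, (2 * p i + 4 * m i) / 3 = 2 := by
    rw [← sum_div, sum_add_distrib, ← mul_sum, ← mul_sum, hpsum, hmsum]
    norm_num
  rw [← hweight, mul_comm]
  refine sum_sq_le_sum_mul_sum_of_sq_le_mul _
    (fun i _ => mul_nonneg (hm0 i) (klFun_nonneg (div_nonneg (hp0 i) (hm0 i))))
    (fun i _ => by linarith [hp0 i, hm0 i]) (fun i _ => ?_)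
  rcases (hm0 i).eq_or_lt with hm | hm
  · simp [← hm, hpm i hm.symm]
  · rw [sq_abs]
    nlinarith [three_mul_sq_sub_le_mul_klFun (hp0 i) hm]

lemma negMulLog_mixture_sub_eq {θ a b : ℝ} (hθ0 : 0 ≤ θ) (hθ1 : θ ≤ 1)
    (ha : 0 ≤ a) (hb : 0 ≤ b) :
    negMulLog (θ * a + (1 - θ) * b) - θ * negMulLog a - (1 - θ) * negMulLog b =
      θ * ((θ * a + (1 - θ) * b) * klFun (a / (θ * a + (1 - θ) * b))) +
        (1 - θ) * ((θ * a + (1 - θ) * b) * klFun (b / (θ * a + (1 - θ) * b))) := by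
  have hθa : 0 ≤ θ * a := mul_nonneg hθ0 ha
  have hθb : 0 ≤ (1 - θ) * b := mul_nonneg (sub_nonneg.2 hθ1) hb
  rcases (add_nonneg hθa hθb).eq_or_lt with hm | hm
  · have ha0 : θ * negMulLog a = 0 := by
      simp only [negMulLog]; linear_combination (-log a) * (by linarith : θ * a = 0)
    have hb0 : (1 - θ) * negMulLog b = 0 := by
      simp only [negMulLog]; linear_combination (-log b) * (by linarith : (1 - θ) * b = 0)
    simp [← hm, ha0, hb0]
  · have hklFun : ∀ c, 0 ≤ c → (θ * a + (1 - θ) * b) * klFun (c / (θ * a + (1 - θ) * b)) =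
        c * log c - c * log (θ * a + (1 - θ) * b) + (θ * a + (1 - θ) * b) - c := fun c hc => by
      rcases hc.eq_or_lt with rfl | hc
      · simp [klFun_zero]
      · rw [klFun_apply, log_div hc.ne' hm.ne']
        field_simp
    rw [hklFun a ha, hklFun b hb]
    simp only [negMulLog]
    ring

section Mixture

variable {ι : Type*} [Fintype ι] {q s : ι → ℝ} {θ : ℝ}

lemma mul_sq_sum_abs_sub_le_sum_klFun (hq0 : ∀ i, 0 ≤ q i) (hqsum : ∑ i, q i = 1)
    (hs0 : ∀ i, 0 ≤ s i) (hssum : ∑ i, s i = 1) (hθ0 : 0 ≤ θ) (hθ1 : θ ≤ 1) :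
    θ * (1 - θ) ^ 2 * (∑ i, |q i - s i|) ^ 2 ≤
      2 * θ * ∑ i, (θ * q i + (1 - θ) * s i) * klFun (q i / (θ * q i + (1 - θ) * s i)) := by
  rcases hθ0.eq_or_lt with rfl | hθ
  · simp
  have hm0 : ∀ i, 0 ≤ θ * q i + (1 - θ) * s i := fun i =>
    add_nonneg (mul_nonneg hθ0 (hq0 i)) (mul_nonneg (sub_nonneg.2 hθ1) (hs0 i))
  have hmsum : ∑ i, (θ * q i + (1 - θ) * s i) = 1 := by
    rw [sum_add_distrib, ← mul_sum, ← mul_sum, hqsum, hssum]; ring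
  have hqm : ∀ i, θ * q i + (1 - θ) * s i = 0 → q i = 0 := fun i hm => by
    have hθq : θ * q i = 0 := by
      linarith [mul_nonneg hθ0 (hq0 i), mul_nonneg (sub_nonneg.2 hθ1) (hs0 i)]
    exact (mul_eq_zero.1 hθq).resolve_left hθ.ne'
  have hdist : ∑ i, |q i - (θ * q i + (1 - θ) * s i)| = (1 - θ) * ∑ i, |q i - s i| := by
    rw [mul_sum]
    refine sum_congr rfl fun i _ => ?_
    rw [show q i - (θ * q i + (1 - θ) * s i) = (1 - θ) * (q i - s i) by ring, abs_mul,
      abs_of_nonneg (sub_nonneg.2 hθ1)]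
  have := sq_sum_abs_sub_le_two_mul_sum_klFun hq0 hqsum hm0 hmsum hqm
  rw [hdist] at this
  nlinarith

theorem sq_sum_abs_sub_le_negMulLog_mixture_sub (hq0 : ∀ i, 0 ≤ q i) (hqsum : ∑ i, q i = 1)
    (hs0 : ∀ i, 0 ≤ s i) (hssum : ∑ i, s i = 1) (hθ0 : 0 ≤ θ) (hθ1 : θ ≤ 1) :
    θ * (1 - θ) / 2 * (∑ i, |q i - s i|) ^ 2 ≤
      ∑ i, negMulLog (θ * q i + (1 - θ) * s i) - θ * ∑ i, negMulLog (q i)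
        - (1 - θ) * ∑ i, negMulLog (s i) := by
  have hq := mul_sq_sum_abs_sub_le_sum_klFun hq0 hqsum hs0 hssum hθ0 hθ1
  have hs := mul_sq_sum_abs_sub_le_sum_klFun hs0 hssum hq0 hqsum (sub_nonneg.2 hθ1)
    (sub_le_self 1 hθ0)
  have hswap : ∀ i, (1 - θ) * s i + (1 - (1 - θ)) * q i = θ * q i + (1 - θ) * s i :=
    fun i => by ring
  simp only [hswap, abs_sub_comm (s _)] at hs
  have hdecomp := sum_congr rfl fun i (_ : i ∈ univ) =>
    negMulLog_mixture_sub_eq hθ0 hθ1 (hq0 i) (hs0 i)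
  rw [sum_sub_distrib, sum_sub_distrib, sum_add_distrib, ← mul_sum, ← mul_sum, ← mul_sum,
    ← mul_sum] at hdecomp
  rw [hdecomp]
  nlinarith

end Mixture

theorem shannon_entropy_strong_concavity_l1_general
    (K : ℕ) (q s : Fin K → ℝ) (θ : ℝ)
    (hq0 : ∀ i, 0 ≤ q i) (hqsum : ∑ i, q i = 1)
    (hs0 : ∀ i, 0 ≤ s i) (hssum : ∑ i, s i = 1)
    (hθ : θ ∈ Set.Icc (0 : ℝ) 1) :
    let H : (Fin K → ℝ) → ℝ := fun p => ∑ i, p i * Real.log (1 / p i)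
    (θ * (1 - θ) / 2) * (∑ i, |q i - s i|) ^ 2
        ≤ H (fun i => θ * q i + (1 - θ) * s i) - θ * H q - (1 - θ) * H s ∧
      (1 / 8) * (∑ i, |q i - s i|) ^ 2
        ≤ H (fun i => (q i + s i) / 2) - (1 / 2) * H q - (1 / 2) * H s := by
  intro H
  have hH : ∀ p, H p = ∑ i, negMulLog (p i) := fun p => by
    simp only [H, negMulLog, one_div, log_inv]
    exact sum_congr rfl fun i _ => by ring
  have hhalf := sq_sum_abs_sub_le_negMulLog_mixture_sub hq0 hqsum hs0 hssum
    (θ := 1 / 2) (by norm_num) (by norm_num)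
  simp only [hH]
  refine ⟨sq_sum_abs_sub_le_negMulLog_mixture_sub hq0 hqsum hs0 hssum hθ.1 hθ.2, ?_⟩
  have hmid : ∀ i, 1 / 2 * q i + (1 - 1 / 2) * s i = (q i + s i) / 2 := fun i => by ring
  simp only [hmid] at hhalf
  convert hhalf using 2 <;> norm_num

/-- Strong concavity of the Shannon entropy with respect
to the `ℓ1` norm: for probability vectors `q, s` on a finite set of size `K`
and `θ ∈ [0,1]`, with `H(p) = Σ_i p_i ln(1/p_i)` (the convention
`0·ln(1/0) = 0` holds automatically in Lean since `1/0 = 0` and `log 0 = 0`),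
`H(θq + (1−θ)s) − θH(q) − (1−θ)H(s) ≥ (θ(1−θ)/2)(Σ_i |q_i − s_i|)²`.
In particular, for `θ = 1/2`,
`H((q+s)/2) − (1/2)H(q) − (1/2)H(s) ≥ (1/8)‖q − s‖₁²`. -/
theorem shannon_entropy_strong_concavity_l1
    (K : ℕ) (hK : 1 ≤ K) (q s : Fin K → ℝ) (θ : ℝ)
    (hq0 : ∀ i, 0 ≤ q i) (hqsum : ∑ i, q i = 1)
    (hs0 : ∀ i, 0 ≤ s i) (hssum : ∑ i, s i = 1)
    (hθ : θ ∈ Set.Icc (0 : ℝ) 1) :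
    let H : (Fin K → ℝ) → ℝ := fun p => ∑ i, p i * Real.log (1 / p i)
    (θ * (1 - θ) / 2) * (∑ i, |q i - s i|) ^ 2
        ≤ H (fun i => θ * q i + (1 - θ) * s i) - θ * H q - (1 - θ) * H s ∧
      (1 / 8) * (∑ i, |q i - s i|) ^ 2
        ≤ H (fun i => (q i + s i) / 2) - (1 / 2) * H q - (1 / 2) * H s :=
  shannon_entropy_strong_concavity_l1_general K q s θ hq0 hqsum hs0 hssum hθ
end

section
/- Let M ≥ 2 be an integer and let x_1,…,x_M ∈ [0,1] satisfy Σ_{j=1}^M x_j = 1. Then Σ_{1≤j<l≤M} |x_j − x_l| ≤ M − 1, with equality if and only if exactly one x_j equals 1 and all the others equal 0. -/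
/-!
For nonnegative reals `|a - b| ≤ a + b`, with equality iff `a = 0` or `b = 0`. Summing
`x j + x l` over the pairs `j < l` counts every `x j` exactly `M - 1` times, which gives
`M - 1`. Hence equality holds iff every pair contains a zero, i.e. iff the whole mass `1`
sits on a single coordinate.
-/

open Finset

section Pairs

variable {ι : Type*} [Fintype ι] [LinearOrder ι]

theorem card_filter_lt_add_card_filter_gt (j : ι) :
    #{l | j < l} + #{l | l < j} = Fintype.card ι - 1 := by
  rw [← card_union_of_disjoint (disjoint_filter.2 fun _ _ h h' => lt_asymm h h'), ← filter_or]
  simp_rw [lt_or_lt_iff_ne, ne_comm (a := j), filter_ne', card_erase_of_mem (mem_univ j), card_univ]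

theorem sum_filter_lt_add_eq_card_sub_one_mul {R : Type*} [Ring R] (f : ι → R) :
    ∑ j, ∑ l ∈ univ.filter (j < ·), (f j + f l) = ((Fintype.card ι : R) - 1) * ∑ j, f j := by
  have hswap : ∑ j, ∑ l ∈ univ.filter (j < ·), f l = ∑ j, ∑ l ∈ univ.filter (· < j), f j :=
    sum_comm' fun _ _ => by simp
  have hcard (j : ι) : ((#{l | j < l} + #{l | l < j} : ℕ) : R) = (Fintype.card ι : R) - 1 := by
    rw [card_filter_lt_add_card_filter_gt, Nat.cast_pred (Fintype.card_pos_iff.2 ⟨j⟩)]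
  simp_rw [sum_add_distrib, hswap, ← sum_add_distrib, sum_const, ← add_smul, nsmul_eq_mul, hcard,
    mul_sum]

theorem exists_eq_one_and_forall_ne_eq_zero_iff {R : Type*} [NonAssocSemiring R] [Nontrivial R]
    {f : ι → R} (hf : ∑ j, f j = 1) :
    (∃ j, f j = 1 ∧ ∀ l, l ≠ j → f l = 0) ↔ ∀ j l, j < l → f j = 0 ∨ f l = 0 := by
  constructor
  · rintro ⟨i, -, hi⟩ j l hjl
    by_cases hj : j = i
    · exact .inr (hi l (hj ▸ hjl.ne'))
    · exact .inl (hi j hj)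
  · intro h
    obtain ⟨j, -, hj⟩ := exists_ne_zero_of_sum_ne_zero (hf ▸ one_ne_zero : ∑ j, f j ≠ 0)
    have hzero : ∀ l, l ≠ j → f l = 0 := fun l hl =>
      hl.lt_or_gt.elim (fun h' => (h l j h').resolve_right hj)
        (fun h' => (h j l h').resolve_left hj)
    exact ⟨j, by rwa [sum_eq_single j (fun l _ => hzero l) (by simp)] at hf, hzero⟩

end Pairs

section Abs

variable {α : Type*} [Field α] [LinearOrder α] [IsStrictOrderedRing α] {a b : α}

theorem abs_sub_le_add_of_nonneg (ha : 0 ≤ a) (hb : 0 ≤ b) : |a - b| ≤ a + b :=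
  abs_sub_le_iff.2 ⟨by linarith, by linarith⟩

theorem abs_sub_eq_add_iff_of_nonneg (ha : 0 ≤ a) (hb : 0 ≤ b) :
    |a - b| = a + b ↔ a = 0 ∨ b = 0 := by
  constructor
  · intro h
    rcases le_total b a with hba | hab
    · rw [abs_of_nonneg (sub_nonneg.2 hba)] at h
      exact .inr (by linarith)
    · rw [abs_of_nonpos (sub_nonpos.2 hab)] at h
      exact .inl (by linarith)
  · rintro (rfl | rfl) <;> simp [ha, hb]

end Abs

theorem sum_pairwise_abs_le_of_sum_eq_one_general
    (M : ℕ) (x : Fin M → ℝ)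
    (hx : ∀ j, x j ∈ Set.Icc (0 : ℝ) 1) (hsum : ∑ j, x j = 1) :
    (∑ j, ∑ l ∈ Finset.univ.filter (fun l => j < l), |x j - x l|)
        ≤ (M : ℝ) - 1 ∧
      ((∑ j, ∑ l ∈ Finset.univ.filter (fun l => j < l), |x j - x l|)
          = (M : ℝ) - 1 ↔
        ∃ j, x j = 1 ∧ ∀ l, l ≠ j → x l = 0) := by
  have hx0 (j : Fin M) : 0 ≤ x j := (hx j).1
  have hbound : ∑ j, ∑ l ∈ univ.filter (j < ·), (x j + x l) = (M : ℝ) - 1 := by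
    rw [sum_filter_lt_add_eq_card_sub_one_mul, hsum, Fintype.card_fin, mul_one]
  have hle (j : Fin M) : ∀ l ∈ univ.filter (j < ·), |x j - x l| ≤ x j + x l :=
    fun l _ => abs_sub_le_add_of_nonneg (hx0 j) (hx0 l)
  refine ⟨hbound ▸ sum_le_sum fun j _ => sum_le_sum (hle j), ?_⟩
  rw [← hbound, sum_eq_sum_iff_of_le fun j _ => sum_le_sum (hle j),
    exists_eq_one_and_forall_ne_eq_zero_iff hsum]
  simp only [sum_eq_sum_iff_of_le (hle _), abs_sub_eq_add_iff_of_nonneg (hx0 _) (hx0 _),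
    mem_univ, mem_filter, true_and, forall_const]

/-- Let `M ≥ 2` and `x_1, …, x_M ∈ [0,1]` with
`Σ_j x_j = 1`.  Then `Σ_{j<l} |x_j − x_l| ≤ M − 1`, with equality iff
exactly one `x_j` equals `1` and all the others equal `0`. -/
theorem sum_pairwise_abs_le_of_sum_eq_one
    (M : ℕ) (hM : 2 ≤ M) (x : Fin M → ℝ)
    (hx : ∀ j, x j ∈ Set.Icc (0 : ℝ) 1) (hsum : ∑ j, x j = 1) :
    (∑ j, ∑ l ∈ Finset.univ.filter (fun l => j < l), |x j - x l|)
        ≤ (M : ℝ) - 1 ∧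
      ((∑ j, ∑ l ∈ Finset.univ.filter (fun l => j < l), |x j - x l|)
          = (M : ℝ) - 1 ↔
        ∃ j, x j = 1 ∧ ∀ l, l ≠ j → x l = 0) :=
  sum_pairwise_abs_le_of_sum_eq_one_general M x hx hsum
end
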